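/- arXiv:math/0410222 — 4 statements merged into one kernel-verified Lean document; each statement's English description precedes it below -/
import Mathlib

section
/- Let F be a field of characteristic zero and q ∈ F nonzero and not a root of unity. Every nonzero rational function R ∈ F(x) admits a factorization R(x) = z · (a(x)/b(x)) · (c(qx)/c(x)) where z ∈ F is nonzero, a, b, c ∈ F[x] are monic, gcd(a(x), b(q^n x)) = 1 for all n ∈ ℕ, gcd(a(x), c(x)) = 1, gcd(b(x), c(qx)) = 1, and c(0) ≠ 0. -/
/-!
Among all representations `R = (a/b) · (c(qx)/c(x))` with `c(0) ≠ 0`, take one minimising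
`(deg a + deg b, deg c)` lexicographically; normalising its leading coefficients gives `z`.
Minimality forces every coprimality condition. A common factor `p` of `a(x)` and `b(qⁿx)` with
`p(0) ≠ 0` is moved into `c` as `e = ∏_{i=1}^{n} p(q⁻ⁱx)`: since `e(qx)/e(x) = p(x)/p(q⁻ⁿx)`
telescopes, this lowers `deg a + deg b` (a common factor `x` simply cancels). A common factor `p`
of `a` and `c` is replaced by `p(qx)` in `a`, and a common factor `p` of `b` and `c(qx)` by
`p(q⁻¹x)` in `b`; both keep `deg a + deg b` and lower `deg c`.
-/

open Polynomial

namespace Polynomial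

section CommSemiring

variable {R : Type*} [CommSemiring R]

noncomputable def dilate (q : R) : R[X] →ₐ[R] R[X] := aeval (C q * X)

lemma dilate_apply (q : R) (p : R[X]) : dilate q p = p.comp (C q * X) := rfl

lemma dilate_C (q r : R) : dilate q (C r) = C r := aeval_C _ _

lemma dilate_dilate (u v : R) (p : R[X]) : dilate u (dilate v p) = dilate (v * u) p := by
  simp only [dilate_apply, comp_assoc, mul_comp, C_comp, X_comp, ← mul_assoc, ← C_mul]

lemma dilate_one (p : R[X]) : dilate 1 p = p := by
  simp [dilate_apply]

lemma eval_zero_dilate (q : R) (p : R[X]) : (dilate q p).eval 0 = p.eval 0 := by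
  simp [dilate_apply, eval_comp]

lemma X_dvd_dilate_iff (q : R) (p : R[X]) : X ∣ dilate q p ↔ X ∣ p := by
  simp only [X_dvd_iff, coeff_zero_eq_eval_zero, eval_zero_dilate]

lemma natDegree_dilate [NoZeroDivisors R] {q : R} (hq : q ≠ 0) (p : R[X]) :
    (dilate q p).natDegree = p.natDegree := by
  rw [dilate_apply, natDegree_comp, natDegree_C_mul_X _ hq, mul_one]

end CommSemiring

section Field

variable {F : Type*} [Field F] {q : F}

lemma dilate_inv_dilate (hq : q ≠ 0) (p : F[X]) : dilate q⁻¹ (dilate q p) = p := by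
  rw [dilate_dilate, mul_inv_cancel₀ hq, dilate_one]

lemma dilate_dilate_inv (hq : q ≠ 0) (p : F[X]) : dilate q (dilate q⁻¹ p) = p := by
  rw [dilate_dilate, inv_mul_cancel₀ hq, dilate_one]

lemma dilate_ne_zero (hq : q ≠ 0) {p : F[X]} (hp : p ≠ 0) : dilate q p ≠ 0 := fun h =>
  hp (by rw [← dilate_inv_dilate hq p, h, map_zero])

lemma dilate_prod_mul_dilate_inv_pow (hq : q ≠ 0) (p : F[X]) (n : ℕ) :
    dilate q (∏ i ∈ Finset.range n, dilate (q⁻¹ ^ (i + 1)) p) * dilate (q⁻¹ ^ n) p =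
      p * ∏ i ∈ Finset.range n, dilate (q⁻¹ ^ (i + 1)) p := by
  induction n with
  | zero => simp [dilate_one]
  | succ n ih =>
    have hshift : dilate q (dilate (q⁻¹ ^ (n + 1)) p) = dilate (q⁻¹ ^ n) p := by
      rw [dilate_dilate, pow_succ, mul_assoc, inv_mul_cancel₀ hq, mul_one]
    rw [Finset.prod_range_succ, map_mul, hshift]
    linear_combination dilate (q⁻¹ ^ (n + 1)) p * ih

lemma exists_dvd_dvd_natDegree_pos_of_not_isCoprime {f g : F[X]} (hf : f ≠ 0)
    (h : ¬IsCoprime f g) : ∃ p : F[X], p ∣ f ∧ p ∣ g ∧ 0 < p.natDegree := by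
  rw [← isRelPrime_iff_isCoprime, IsRelPrime] at h
  push Not at h
  obtain ⟨p, hpf, hpg, hp⟩ := h
  exact ⟨p, hpf, hpg, natDegree_pos_iff_degree_pos.2 <|
    degree_pos_of_ne_zero_of_nonunit (ne_zero_of_dvd_ne_zero hf hpf) hp⟩

end Field

end Polynomial

section QGosper

variable {F : Type*} [Field F] {q : F} {R : RatFunc F} {a b c : F[X]}

local notation "A" => algebraMap F[X] (RatFunc F)

noncomputable def qRatio (q : F) (a b c : F[X]) : RatFunc F :=
  A a / A b * (A (dilate q c) / A c)

lemma qRatio_eq_qRatio {a' b' c' : F[X]} (hb : b ≠ 0) (hc : c ≠ 0) (hb' : b' ≠ 0)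
    (hc' : c' ≠ 0) (h : a * dilate q c * b' * c' = a' * dilate q c' * b * c) :
    qRatio q a b c = qRatio q a' b' c' := by
  have h' := congrArg A h
  simp only [map_mul] at h'
  unfold qRatio
  field_simp [RatFunc.algebraMap_ne_zero, hb, hc, hb', hc']
  linear_combination h'

lemma qRatio_mul_C (a b c : F[X]) (u : F) {v w : F} (hv : v ≠ 0) (hw : w ≠ 0) (hb : b ≠ 0)
    (hc : c ≠ 0) :
    qRatio q (a * C u) (b * C v) (c * C w) = RatFunc.C (u / v) * qRatio q a b c := by
  simp only [qRatio, map_mul, dilate_C, RatFunc.algebraMap_C, map_div₀]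
  field_simp [RatFunc.algebraMap_ne_zero, hb, hc, hv, hw]

structure IsQRepr (q : F) (R : RatFunc F) (a b c : F[X]) : Prop where
  a_ne_zero : a ≠ 0
  b_ne_zero : b ≠ 0
  eval_zero_ne_zero : c.eval 0 ≠ 0
  eq_qRatio : R = qRatio q a b c

lemma IsQRepr.c_ne_zero (h : IsQRepr q R a b c) : c ≠ 0 := by
  rintro rfl
  exact h.eval_zero_ne_zero eval_zero

lemma isQRepr_num_denom (q : F) (hR : R ≠ 0) : IsQRepr q R R.num R.denom 1 where
  a_ne_zero := RatFunc.num_ne_zero hR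
  b_ne_zero := R.denom_ne_zero
  eval_zero_ne_zero := by simp
  eq_qRatio := by simp [qRatio, RatFunc.num_div_denom]

def qMeasure (a b c : F[X]) : ℕ ×ₗ ℕ := toLex (a.natDegree + b.natDegree, c.natDegree)

lemma qMeasure_lt_qMeasure_iff {a' b' c' : F[X]} :
    qMeasure a' b' c' < qMeasure a b c ↔
      a'.natDegree + b'.natDegree < a.natDegree + b.natDegree ∨
      a'.natDegree + b'.natDegree = a.natDegree + b.natDegree ∧ c'.natDegree < c.natDegree :=
  Prod.Lex.toLex_lt_toLex

def HasSmallerQRepr (q : F) (R : RatFunc F) (a b c : F[X]) : Prop :=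
  ∃ a' b' c', IsQRepr q R a' b' c' ∧ qMeasure a' b' c' < qMeasure a b c

namespace IsQRepr

lemma hasSmallerQRepr_of_X_dvd (h : IsQRepr q R a b c) (ha : X ∣ a) (hb : X ∣ b) :
    HasSmallerQRepr q R a b c := by
  obtain ⟨a₁, rfl⟩ := ha
  obtain ⟨b₁, rfl⟩ := hb
  have ha₁ : a₁ ≠ 0 := right_ne_zero_of_mul h.a_ne_zero
  have hb₁ : b₁ ≠ 0 := right_ne_zero_of_mul h.b_ne_zero
  refine ⟨a₁, b₁, c, ⟨ha₁, hb₁, h.eval_zero_ne_zero, h.eq_qRatio.trans ?_⟩, ?_⟩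
  · exact qRatio_eq_qRatio h.b_ne_zero h.c_ne_zero hb₁ h.c_ne_zero (by ring)
  · rw [qMeasure_lt_qMeasure_iff, natDegree_mul X_ne_zero ha₁,
      natDegree_mul X_ne_zero hb₁, natDegree_X]
    omega

lemma hasSmallerQRepr_of_dvd_of_dvd_dilate (hq : q ≠ 0) (h : IsQRepr q R a b c) {n : ℕ} {p : F[X]}
    (hp : 0 < p.natDegree) (hp0 : p.eval 0 ≠ 0) (hpa : p ∣ a) (hpb : p ∣ dilate (q ^ n) b) :
    HasSmallerQRepr q R a b c := by
  have hqi : q⁻¹ ≠ 0 := inv_ne_zero hq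
  have hp₀ : p ≠ 0 := ne_zero_of_natDegree_gt hp
  set e := ∏ i ∈ Finset.range n, dilate (q⁻¹ ^ (i + 1)) p
  have he : e ≠ 0 := Finset.prod_ne_zero_iff.2 fun i _ => dilate_ne_zero (pow_ne_zero _ hqi) hp₀
  have tele : dilate q e * dilate (q⁻¹ ^ n) p = p * e := dilate_prod_mul_dilate_inv_pow hq p n
  have hpnb : dilate (q⁻¹ ^ n) p ∣ b := by
    simpa [dilate_dilate, ← mul_pow, dilate_one, hq] using map_dvd (dilate (q⁻¹ ^ n)) hpb
  obtain ⟨a₁, rfl⟩ := hpa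
  obtain ⟨b₁, rfl⟩ := hpnb
  have ha₁ : a₁ ≠ 0 := right_ne_zero_of_mul h.a_ne_zero
  have hb₁ : b₁ ≠ 0 := right_ne_zero_of_mul h.b_ne_zero
  refine ⟨a₁, b₁, c * e, ⟨ha₁, hb₁, ?_, h.eq_qRatio.trans ?_⟩, ?_⟩
  · simp only [e, eval_mul, eval_prod, eval_zero_dilate]
    exact mul_ne_zero h.eval_zero_ne_zero (Finset.prod_ne_zero_iff.2 fun _ _ => hp0)
  · refine qRatio_eq_qRatio h.b_ne_zero h.c_ne_zero hb₁ (mul_ne_zero h.c_ne_zero he) ?_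
    rw [map_mul]
    linear_combination a₁ * dilate q c * b₁ * c * tele.symm
  · rw [qMeasure_lt_qMeasure_iff, natDegree_mul hp₀ ha₁,
      natDegree_mul (dilate_ne_zero (pow_ne_zero _ hqi) hp₀) hb₁,
      natDegree_dilate (pow_ne_zero _ hqi)]
    omega

lemma hasSmallerQRepr_of_dvd_of_dvd (hq : q ≠ 0) (h : IsQRepr q R a b c) {p : F[X]}
    (hp : 0 < p.natDegree) (hpa : p ∣ a) (hpc : p ∣ c) :
    HasSmallerQRepr q R a b c := by
  have hp₀ : p ≠ 0 := ne_zero_of_natDegree_gt hp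
  obtain ⟨a₁, rfl⟩ := hpa
  obtain ⟨c₁, rfl⟩ := hpc
  have ha₁ : a₁ ≠ 0 := right_ne_zero_of_mul h.a_ne_zero
  have hc₁ : c₁ ≠ 0 := right_ne_zero_of_mul h.c_ne_zero
  refine ⟨a₁ * dilate q p, b, c₁, ⟨mul_ne_zero ha₁ (dilate_ne_zero hq hp₀), h.b_ne_zero, ?_,
    h.eq_qRatio.trans ?_⟩, ?_⟩
  · exact right_ne_zero_of_mul (by simpa only [eval_mul] using h.eval_zero_ne_zero)
  · exact qRatio_eq_qRatio h.b_ne_zero h.c_ne_zero h.b_ne_zero hc₁ (by simp only [map_mul]; ring)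
  · rw [qMeasure_lt_qMeasure_iff, natDegree_mul hp₀ ha₁,
      natDegree_mul ha₁ (dilate_ne_zero hq hp₀), natDegree_dilate hq, natDegree_mul hp₀ hc₁]
    omega

lemma hasSmallerQRepr_of_dvd_of_dvd_dilate_self (hq : q ≠ 0) (h : IsQRepr q R a b c) {p : F[X]}
    (hp : 0 < p.natDegree) (hpb : p ∣ b) (hpc : p ∣ dilate q c) :
    HasSmallerQRepr q R a b c := by
  have hqi : q⁻¹ ≠ 0 := inv_ne_zero hq
  have hp₀ : p ≠ 0 := ne_zero_of_natDegree_gt hp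
  obtain ⟨b₁, rfl⟩ := hpb
  obtain ⟨g, hg⟩ := hpc
  obtain rfl : c = dilate q⁻¹ p * dilate q⁻¹ g := by
    rw [← map_mul, ← hg, dilate_inv_dilate hq]
  have hb₁ : b₁ ≠ 0 := right_ne_zero_of_mul h.b_ne_zero
  have hg₁ : dilate q⁻¹ g ≠ 0 := right_ne_zero_of_mul h.c_ne_zero
  have hb' : b₁ * dilate q⁻¹ p ≠ 0 := mul_ne_zero hb₁ (dilate_ne_zero hqi hp₀)
  refine ⟨a, b₁ * dilate q⁻¹ p, dilate q⁻¹ g, ⟨h.a_ne_zero, hb', ?_, h.eq_qRatio.trans ?_⟩, ?_⟩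
  · exact right_ne_zero_of_mul (by simpa only [eval_mul] using h.eval_zero_ne_zero)
  · refine qRatio_eq_qRatio h.b_ne_zero h.c_ne_zero hb' hg₁ ?_
    simp only [map_mul, dilate_dilate_inv hq]
    ring
  · rw [qMeasure_lt_qMeasure_iff, natDegree_mul hp₀ hb₁,
      natDegree_mul hb₁ (dilate_ne_zero hqi hp₀), natDegree_mul (dilate_ne_zero hqi hp₀) hg₁,
      natDegree_dilate hqi]
    omega

end IsQRepr

lemma IsQRepr.exists_coprime (hq : q ≠ 0) (h : IsQRepr q R a b c) :
    ∃ a b c, IsQRepr q R a b c ∧ (∀ n : ℕ, IsCoprime a (dilate (q ^ n) b)) ∧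
      IsCoprime a c ∧ IsCoprime b (dilate q c) := by
  obtain ⟨⟨a₀, b₀, c₀⟩, hr, hmin⟩ :=
    (InvImage.wf (fun t : F[X] × F[X] × F[X] => qMeasure t.1 t.2.1 t.2.2) wellFounded_lt).has_min
      {t | IsQRepr q R t.1 t.2.1 t.2.2} ⟨(a, b, c), h⟩
  replace hr : IsQRepr q R a₀ b₀ c₀ := hr
  have minimal : ¬HasSmallerQRepr q R a₀ b₀ c₀ :=
    fun ⟨a', b', c', hr', hlt⟩ => hmin (a', b', c') hr' hlt
  refine ⟨a₀, b₀, c₀, hr, fun n => ?_, ?_, ?_⟩ <;> by_contra hnc <;> refine minimal ?_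
  · obtain ⟨p, hpa, hpb, hp⟩ := exists_dvd_dvd_natDegree_pos_of_not_isCoprime hr.a_ne_zero hnc
    by_cases hp0 : p.eval 0 = 0
    · have hXp : X ∣ p := by rwa [X_dvd_iff, coeff_zero_eq_eval_zero]
      exact hr.hasSmallerQRepr_of_X_dvd (hXp.trans hpa) ((X_dvd_dilate_iff _ _).1 (hXp.trans hpb))
    · exact hr.hasSmallerQRepr_of_dvd_of_dvd_dilate hq hp hp0 hpa hpb
  · obtain ⟨p, hpa, hpc, hp⟩ := exists_dvd_dvd_natDegree_pos_of_not_isCoprime hr.a_ne_zero hnc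
    exact hr.hasSmallerQRepr_of_dvd_of_dvd hq hp hpa hpc
  · obtain ⟨p, hpb, hpc, hp⟩ := exists_dvd_dvd_natDegree_pos_of_not_isCoprime hr.b_ne_zero hnc
    exact hr.hasSmallerQRepr_of_dvd_of_dvd_dilate_self hq hp hpb hpc

end QGosper

theorem qGosper_form_exists_general (F : Type*) [Field F] (q : F)
    (hq : q ≠ 0)
    (R : RatFunc F) (hR : R ≠ 0) :
    ∃ (z : F) (a b c : Polynomial F), z ≠ 0 ∧ a.Monic ∧ b.Monic ∧ c.Monic ∧
      (∀ n : ℕ, IsCoprime a (b.comp (Polynomial.C (q ^ n) * Polynomial.X))) ∧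
      IsCoprime a c ∧
      IsCoprime b (c.comp (Polynomial.C q * Polynomial.X)) ∧
      c.eval 0 ≠ 0 ∧
      R = RatFunc.C z *
          (algebraMap (Polynomial F) (RatFunc F) a / algebraMap (Polynomial F) (RatFunc F) b) *
          (algebraMap (Polynomial F) (RatFunc F) (c.comp (Polynomial.C q * Polynomial.X)) /
            algebraMap (Polynomial F) (RatFunc F) c) := by
  obtain ⟨a, b, c, h, hab, hac, hbc⟩ := (isQRepr_num_denom q hR).exists_coprime hq
  have unit_lc_inv : ∀ f : F[X], f ≠ 0 → IsUnit (C f.leadingCoeff⁻¹) := fun f hf =>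
    isUnit_C.2 (inv_ne_zero (leadingCoeff_ne_zero.2 hf)).isUnit
  have ha := h.a_ne_zero
  have hb := h.b_ne_zero
  have hc := h.c_ne_zero
  refine ⟨a.leadingCoeff / b.leadingCoeff, a * C a.leadingCoeff⁻¹, b * C b.leadingCoeff⁻¹,
    c * C c.leadingCoeff⁻¹, by simp [ha, hb], monic_mul_leadingCoeff_inv ha,
    monic_mul_leadingCoeff_inv hb, monic_mul_leadingCoeff_inv hc, fun n => ?_, ?_, ?_, ?_, ?_⟩
  · rw [← dilate_apply, map_mul, dilate_C,
      isCoprime_mul_units_right (unit_lc_inv a ha) (unit_lc_inv b hb)]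
    exact hab n
  · exact (isCoprime_mul_units_right (unit_lc_inv a ha) (unit_lc_inv c hc) _ _).2 hac
  · rw [← dilate_apply, map_mul, dilate_C,
      isCoprime_mul_units_right (unit_lc_inv b hb) (unit_lc_inv c hc)]
    exact hbc
  · simpa [ha, hc] using h.eval_zero_ne_zero
  · rw [mul_assoc, ← dilate_apply, ← qRatio, qRatio_mul_C _ _ _ _ (by simp [hb]) (by simp [hc]) hb
      hc, ← mul_assoc, ← map_mul, div_mul_div_comm, mul_inv_cancel₀ (by simpa using ha),
      mul_inv_cancel₀ (by simpa using hb), div_one, map_one, one_mul, h.eq_qRatio]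

/-- Every nonzero rational function has a `q`-Gosper form
`R = z · (a/b) · (c(qx)/c(x))`. -/
theorem qGosper_form_exists (F : Type*) [Field F] [CharZero F] (q : F)
    (hq : q ≠ 0) (hq1 : ∀ n : ℕ, 0 < n → q ^ n ≠ 1)
    (R : RatFunc F) (hR : R ≠ 0) :
    ∃ (z : F) (a b c : Polynomial F), z ≠ 0 ∧ a.Monic ∧ b.Monic ∧ c.Monic ∧
      (∀ n : ℕ, IsCoprime a (b.comp (Polynomial.C (q ^ n) * Polynomial.X))) ∧
      IsCoprime a c ∧
      IsCoprime b (c.comp (Polynomial.C q * Polynomial.X)) ∧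
      c.eval 0 ≠ 0 ∧
      R = RatFunc.C z *
          (algebraMap (Polynomial F) (RatFunc F) a / algebraMap (Polynomial F) (RatFunc F) b) *
          (algebraMap (Polynomial F) (RatFunc F) (c.comp (Polynomial.C q * Polynomial.X)) /
            algebraMap (Polynomial F) (RatFunc F) c) :=
  qGosper_form_exists_general F q hq R hR
end

section
/- Let F be a field of characteristic zero and q ∈ F nonzero and not a root of unity. Every rational function R ∈ F(x) has a q-rational normal form: there exist polynomials r, s, u, v ∈ F[x] with R = (r/s) · (ε(u/v))/(u/v), where gcd(u, v) = 1, neither u nor v is divisible by x, and gcd(r(x), s(q^h x)) = 1 for all integers h. -/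
open Polynomial Finset

section Aux

variable {F : Type*} [Field F]

lemma comp_comp (c c' : F) (p : Polynomial F) :
    (p.comp (C c * X)).comp (C c' * X) = p.comp (C (c * c') * X) := by
  rw [comp_assoc]
  congr 1
  rw [mul_comp, C_comp, X_comp, ← mul_assoc, ← C_mul]

lemma comp_one' (p : Polynomial F) : p.comp (C (1:F) * X) = p := by simp

lemma comp_CX_ne_zero {c : F} (hc : c ≠ 0) {p : Polynomial F} (hp : p ≠ 0) :
    p.comp (C c * X) ≠ 0 := by
  intro h0
  apply hp
  have := congrArg (fun t => Polynomial.comp t (C c⁻¹ * X)) h0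
  simpa [comp_comp, mul_inv_cancel₀ hc] using this

lemma natDegree_comp_CX {c : F} (hc : c ≠ 0) (p : Polynomial F) :
    (p.comp (C c * X)).natDegree = p.natDegree := by
  rw [natDegree_comp, natDegree_C_mul_X c hc, mul_one]

noncomputable def qsh (c : F) : Polynomial F →+* Polynomial F :=
  eval₂RingHom Polynomial.C (C c * X)

lemma qsh_apply (c : F) (p : Polynomial F) : qsh c p = p.comp (C c * X) := rfl

lemma tele_pos (q : F) (hq : q ≠ 0) (d : Polynomial F) (k : ℕ) :
    ((∏ i ∈ Finset.range k, d.comp (C (q ^ (-(i+1:ℕ):ℤ)) * X)).comp (C q * X)) *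
      d.comp (C (q ^ (-(k:ℤ))) * X)
    = d * ∏ i ∈ Finset.range k, d.comp (C (q ^ (-(i+1:ℕ):ℤ)) * X) := by
  have hstep : ∀ i : ℕ, (d.comp (C (q ^ (-(i+1:ℕ):ℤ)) * X)).comp (C q * X)
      = d.comp (C (q ^ (-(i:ℕ):ℤ)) * X) := by
    intro i
    have harg : q ^ (-(i+1:ℕ):ℤ) * q = q ^ (-(i:ℕ):ℤ) := by
      have h1 : (-(i+1:ℕ):ℤ) = -(i:ℕ) + (-1) := by push_cast; ring
      rw [h1, zpow_add₀ hq, zpow_neg_one, mul_assoc, inv_mul_cancel₀ hq, mul_one]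
    rw [comp_comp, harg]
  have hmap : (∏ i ∈ Finset.range k, d.comp (C (q ^ (-(i+1:ℕ):ℤ)) * X)).comp (C q * X)
      = ∏ i ∈ Finset.range k, d.comp (C (q ^ (-(i:ℕ):ℤ)) * X) := by
    rw [← qsh_apply, map_prod]
    exact Finset.prod_congr rfl fun i _ => hstep i
  rw [hmap, ← Finset.prod_range_succ, Finset.prod_range_succ']
  simp
  ring

lemma tele_neg (q : F) (hq : q ≠ 0) (d : Polynomial F) (k : ℕ) :
    d * ((∏ i ∈ Finset.range k, d.comp (C (q ^ (i:ℤ)) * X)).comp (C q * X))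
    = (∏ i ∈ Finset.range k, d.comp (C (q ^ (i:ℤ)) * X)) * d.comp (C (q ^ (k:ℤ)) * X) := by
  have hstep : ∀ i : ℕ, (d.comp (C (q ^ (i:ℤ)) * X)).comp (C q * X)
      = d.comp (C (q ^ ((i+1:ℕ):ℤ)) * X) := by
    intro i
    have harg : q ^ (i:ℤ) * q = q ^ ((i+1:ℕ):ℤ) := by
      have h1 : ((i+1:ℕ):ℤ) = (i:ℤ) + 1 := by push_cast; ring
      rw [h1, zpow_add₀ hq, zpow_one]
    rw [comp_comp, harg]
  have hmap : (∏ i ∈ Finset.range k, d.comp (C (q ^ (i:ℤ)) * X)).comp (C q * X)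
      = ∏ i ∈ Finset.range k, d.comp (C (q ^ ((i+1:ℕ):ℤ)) * X) := by
    rw [← qsh_apply, map_prod]
    exact Finset.prod_congr rfl fun i _ => hstep i
  rw [hmap, ← Finset.prod_range_succ, Finset.prod_range_succ']
  simp
  ring

theorem key (q : F) (hq : q ≠ 0) :
    ∀ N : ℕ, ∀ a b : Polynomial F, b ≠ 0 → a.natDegree + b.natDegree ≤ N →
    ∃ r s u v : Polynomial F, s ≠ 0 ∧ u ≠ 0 ∧ v ≠ 0 ∧
      (∀ h : ℤ, IsCoprime r (s.comp (C (q ^ h) * X))) ∧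
      algebraMap (Polynomial F) (RatFunc F) a / algebraMap (Polynomial F) (RatFunc F) b =
        (algebraMap (Polynomial F) (RatFunc F) r / algebraMap (Polynomial F) (RatFunc F) s) *
          ((algebraMap (Polynomial F) (RatFunc F) (u.comp (C q * X)) /
              algebraMap (Polynomial F) (RatFunc F) (v.comp (C q * X))) /
            (algebraMap (Polynomial F) (RatFunc F) u /
              algebraMap (Polynomial F) (RatFunc F) v)) := by
  classical
  letI : GCDMonoid (Polynomial F) := EuclideanDomain.gcdMonoid _
  intro N
  induction N using Nat.strong_induction_on with
  | _ N IH =>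
  intro a b hb hN
  by_cases ha : a = 0
  · refine ⟨0, 1, 1, 1, one_ne_zero, one_ne_zero, one_ne_zero, ?_, ?_⟩
    · intro h
      rw [one_comp]
      exact isCoprime_one_right
    · simp [ha]
  by_cases hcop : ∀ h : ℤ, IsCoprime a (b.comp (C (q ^ h) * X))
  · refine ⟨a, b, 1, 1, hb, one_ne_zero, one_ne_zero, hcop, ?_⟩
    simp
  push_neg at hcop
  obtain ⟨h, hnc⟩ := hcop
  have hqh : q ^ h ≠ 0 := zpow_ne_zero _ hq
  have hqnh : q ^ (-h) ≠ 0 := zpow_ne_zero _ hq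
  set B := b.comp (C (q ^ h) * X) with hBdef
  have hBne : B ≠ 0 := comp_CX_ne_zero hqh hb
  have hd_dvd_a : gcd a B ∣ a := gcd_dvd_left a B
  have hd_dvd_B : gcd a B ∣ B := gcd_dvd_right a B
  set d := gcd a B with hddef
  have hdne : d ≠ 0 := fun h0 => ha (by simpa [h0, zero_dvd_iff] using hd_dvd_a)
  have hdnu : ¬ IsUnit d := fun hu => hnc ((gcd_isUnit_iff a B).mp hu)
  have hddeg : 0 < d.natDegree := by
    rcases Nat.eq_zero_or_pos d.natDegree with h0 | h1
    · obtain ⟨c, hc⟩ := Polynomial.natDegree_eq_zero.mp h0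
      exact absurd (isUnit_C.mpr (isUnit_iff_ne_zero.mpr
        (fun hc0 => hdne (by rw [← hc, hc0, map_zero])))) (hc ▸ hdnu)
    · exact h1
  obtain ⟨a₁, ha₁⟩ := hd_dvd_a
  obtain ⟨b₁', hb₁'⟩ := hd_dvd_B
  set e := d.comp (C (q ^ (-h)) * X) with hedef
  set b₁ := b₁'.comp (C (q ^ (-h)) * X) with hb₁def
  have hbfac : b = e * b₁ := by
    have hqq : q ^ h * q ^ (-h) = 1 := by
      rw [← zpow_add₀ hq]; simp
    calc b = (b.comp (C (q ^ h) * X)).comp (C (q ^ (-h)) * X) := by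
            rw [comp_comp, hqq, comp_one']
      _ = e * b₁ := by rw [← hBdef, hb₁', mul_comp]
  have ha₁ne : a₁ ≠ 0 := fun h0 => ha (by rw [ha₁, h0, mul_zero])
  have hb₁ne : b₁ ≠ 0 := fun h0 => hb (by rw [hbfac, h0, mul_zero])
  have hene : e ≠ 0 := comp_CX_ne_zero hqnh hdne
  have hb₁'ne : b₁' ≠ 0 := fun h0 => hb₁ne (by rw [hb₁def, h0, zero_comp])
  have hdega : a.natDegree = d.natDegree + a₁.natDegree := by
    rw [ha₁, natDegree_mul hdne ha₁ne]
  have hdegb : b.natDegree = d.natDegree + b₁.natDegree := by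
    rw [hbfac, natDegree_mul hene hb₁ne, hedef, natDegree_comp_CX hqnh]
  have hlt : a₁.natDegree + b₁.natDegree < N := by omega
  obtain ⟨r, s, u, v, hs, hu, hv, hrs, heq⟩ :=
    IH (a₁.natDegree + b₁.natDegree) hlt a₁ b₁ hb₁ne le_rfl
  set A := algebraMap (Polynomial F) (RatFunc F) with hAdef
  have hAd : A d ≠ 0 := RatFunc.algebraMap_ne_zero hdne
  have hAe : A e ≠ 0 := RatFunc.algebraMap_ne_zero hene
  have hAa₁ : A a₁ ≠ 0 := RatFunc.algebraMap_ne_zero ha₁ne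
  have hAb₁ : A b₁ ≠ 0 := RatFunc.algebraMap_ne_zero hb₁ne
  have hAs : A s ≠ 0 := RatFunc.algebraMap_ne_zero hs
  have hAu : A u ≠ 0 := RatFunc.algebraMap_ne_zero hu
  have hAv : A v ≠ 0 := RatFunc.algebraMap_ne_zero hv
  have hAuσ : A (u.comp (C q * X)) ≠ 0 := RatFunc.algebraMap_ne_zero (comp_CX_ne_zero hq hu)
  have hAvσ : A (v.comp (C q * X)) ≠ 0 := RatFunc.algebraMap_ne_zero (comp_CX_ne_zero hq hv)
  rcases le_or_gt 0 h with hh | hh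
  · -- h ≥ 0
    set k := h.toNat with hkdef
    have hk : (k : ℤ) = h := Int.toNat_of_nonneg hh
    set w := ∏ i ∈ Finset.range k, d.comp (C (q ^ (-(i+1:ℕ):ℤ)) * X) with hwdef
    have hwne : w ≠ 0 :=
      Finset.prod_ne_zero_iff.mpr fun i _ => comp_CX_ne_zero (zpow_ne_zero _ hq) hdne
    have hAw : A w ≠ 0 := RatFunc.algebraMap_ne_zero hwne
    have hAwσ : A (w.comp (C q * X)) ≠ 0 := RatFunc.algebraMap_ne_zero (comp_CX_ne_zero hq hwne)
    have htele := tele_pos q hq d k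
    rw [hk] at htele
    -- htele : (w.comp (C q * X)) * e = d * w
    refine ⟨r, s, u * w, v, hs, mul_ne_zero hu hwne, hv, hrs, ?_⟩
    have h2 : A d / A e = A (w.comp (C q * X)) / A w := by
      rw [div_eq_div_iff hAe hAw, ← map_mul, ← map_mul]
      exact congrArg A htele.symm
    rw [ha₁, hbfac, mul_comp, map_mul, map_mul, map_mul, map_mul]
    have h1 : A d * A a₁ / (A e * A b₁) = A a₁ / A b₁ * (A d / A e) := by
      field_simp
    rw [h1, h2, heq]
    field_simp
  · -- h < 0
    set k := (-h).toNat with hkdef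
    have hk : (k : ℤ) = -h := Int.toNat_of_nonneg (by omega)
    set w := ∏ i ∈ Finset.range k, d.comp (C (q ^ (i:ℤ)) * X) with hwdef
    have hwne : w ≠ 0 :=
      Finset.prod_ne_zero_iff.mpr fun i _ => comp_CX_ne_zero (zpow_ne_zero _ hq) hdne
    have hAw : A w ≠ 0 := RatFunc.algebraMap_ne_zero hwne
    have hAwσ : A (w.comp (C q * X)) ≠ 0 := RatFunc.algebraMap_ne_zero (comp_CX_ne_zero hq hwne)
    have htele := tele_neg q hq d k
    rw [hk] at htele
    -- htele : d * (w.comp (C q * X)) = w * e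
    refine ⟨r, s, u, v * w, hs, hu, mul_ne_zero hv hwne, hrs, ?_⟩
    have h2 : A d / A e = A w / A (w.comp (C q * X)) := by
      rw [div_eq_div_iff hAe hAwσ, ← map_mul, ← map_mul]
      exact congrArg A htele
    rw [ha₁, hbfac, mul_comp, map_mul, map_mul, map_mul, map_mul]
    have h1 : A d * A a₁ / (A e * A b₁) = A a₁ / A b₁ * (A d / A e) := by
      field_simp
    rw [h1, h2, heq]
    field_simp
lemma field_aux {K : Type*} [Field K] (r s g g' cm cn xm xn u v u' v' : K)
    (hs : s ≠ 0) (hg : g ≠ 0) (hg' : g' ≠ 0) (hxm : xm ≠ 0) (hxn : xn ≠ 0)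
    (hcm : cm ≠ 0) (hcn : cn ≠ 0) (hu : u ≠ 0) (hv : v ≠ 0) (hu' : u' ≠ 0) (hv' : v' ≠ 0) :
    r / s * (g' * (cm * xm * u') / (g' * (cn * xn * v')) / (g * (xm * u) / (g * (xn * v)))) =
    cm * r / (cn * s) * (u' / v' / (u / v)) := by
  rw [mul_div_mul_left _ _ hg', mul_div_mul_left _ _ hg]
  rw [div_div_div_eq, div_div_div_eq]
  rw [div_mul_div_comm, div_mul_div_comm]
  rw [div_eq_div_iff (by simp [hs, hg, hg', hxm, hxn, hcm, hcn, hu, hv, hu', hv'])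
    (by simp [hs, hg, hg', hxm, hxn, hcm, hcn, hu, hv, hu', hv'])]
  ring
lemma exists_X_pow : ∀ (n : ℕ) (u : Polynomial F), u ≠ 0 → u.natDegree ≤ n →
    ∃ (k : ℕ) (w : Polynomial F), ¬ X ∣ w ∧ u = X ^ k * w := by
  intro n
  induction n with
  | zero =>
    intro u hu hdeg
    refine ⟨0, u, fun hdvd => ?_, by ring⟩
    have h1 := Polynomial.natDegree_le_of_dvd hdvd hu
    rw [natDegree_X] at h1
    omega
  | succ n IHn =>
    intro u hu hdeg
    by_cases hX : X ∣ u
    · obtain ⟨w, rfl⟩ := hX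
      have hw : w ≠ 0 := right_ne_zero_of_mul hu
      have hdw : w.natDegree ≤ n := by
        rw [natDegree_mul X_ne_zero hw, natDegree_X] at hdeg
        omega
      obtain ⟨k, w', hw', hfac⟩ := IHn w hw hdw
      exact ⟨k + 1, w', hw', by rw [hfac]; ring⟩
    · exact ⟨0, u, hX, by ring⟩

end Aux

/-- Every rational function `R ∈ F(x)` has a `q`-rational normal form:
`R = (r/s) · ε(u/v)/(u/v)` with `gcd(u,v) = 1`, `x ∤ u`, `x ∤ v`, and `r/s` ε-reduced
(i.e. `gcd(r(x), s(q^h x)) = 1` for all integers `h`). -/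
theorem qRNF_exists (F : Type*) [Field F] [CharZero F] (q : F)
    (hq : q ≠ 0) (hq1 : ∀ n : ℕ, 0 < n → q ^ n ≠ 1)
    (R : RatFunc F) :
    ∃ r s u v : Polynomial F, s ≠ 0 ∧ u ≠ 0 ∧ v ≠ 0 ∧
      IsCoprime u v ∧ ¬ (Polynomial.X ∣ u) ∧ ¬ (Polynomial.X ∣ v) ∧
      (∀ h : ℤ, IsCoprime r (s.comp (Polynomial.C (q ^ h) * Polynomial.X))) ∧
      R = (algebraMap (Polynomial F) (RatFunc F) r / algebraMap (Polynomial F) (RatFunc F) s) *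
          ((algebraMap (Polynomial F) (RatFunc F) (u.comp (Polynomial.C q * Polynomial.X)) /
              algebraMap (Polynomial F) (RatFunc F) (v.comp (Polynomial.C q * Polynomial.X))) /
            (algebraMap (Polynomial F) (RatFunc F) u /
              algebraMap (Polynomial F) (RatFunc F) v)) := by

  classical
  letI : GCDMonoid (Polynomial F) := EuclideanDomain.gcdMonoid _
  obtain ⟨r, s, u, v, hs, hu, hv, hrs, heq⟩ :=
    key q hq (R.num.natDegree + R.denom.natDegree) R.num R.denom R.denom_ne_zero le_rfl
  have hR : R = (algebraMap (Polynomial F) (RatFunc F) r / algebraMap (Polynomial F) (RatFunc F) s) *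
      ((algebraMap (Polynomial F) (RatFunc F) (u.comp (C q * X)) /
          algebraMap (Polynomial F) (RatFunc F) (v.comp (C q * X))) /
        (algebraMap (Polynomial F) (RatFunc F) u /
          algebraMap (Polynomial F) (RatFunc F) v)) := (RatFunc.num_div_denom R).symm.trans heq
  set g := gcd u v with hgdef
  have hgne : g ≠ 0 := fun h0 => hu ((gcd_eq_zero_iff u v).mp h0).1
  have hu₁ : g * (u / g) = u := EuclideanDomain.mul_div_cancel' hgne (gcd_dvd_left u v)
  have hv₁ : g * (v / g) = v := EuclideanDomain.mul_div_cancel' hgne (gcd_dvd_right u v)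
  have hu₁ne : u / g ≠ 0 := fun h0 => hu (by rw [← hu₁, h0, mul_zero])
  have hv₁ne : v / g ≠ 0 := fun h0 => hv (by rw [← hv₁, h0, mul_zero])
  have hcop₁ : IsCoprime (u / g) (v / g) := isCoprime_div_gcd_div_gcd hv
  obtain ⟨m, u₂, hXu₂, hufac⟩ := exists_X_pow (u / g).natDegree (u / g) hu₁ne le_rfl
  obtain ⟨n, v₂, hXv₂, hvfac⟩ := exists_X_pow (v / g).natDegree (v / g) hv₁ne le_rfl
  have hu₂ne : u₂ ≠ 0 := fun h0 => hu₁ne (by rw [hufac, h0, mul_zero])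
  have hv₂ne : v₂ ≠ 0 := fun h0 => hv₁ne (by rw [hvfac, h0, mul_zero])
  have hcop₂ : IsCoprime u₂ v₂ :=
    (hcop₁.of_isCoprime_of_dvd_left ⟨X ^ m, by rw [hufac]; ring⟩).of_isCoprime_of_dvd_right
      ⟨X ^ n, by rw [hvfac]; ring⟩
  have hqm : IsUnit (C (q ^ m)) := isUnit_C.mpr (isUnit_iff_ne_zero.mpr (pow_ne_zero _ hq))
  have hqn : IsUnit (C (q ^ n)) := isUnit_C.mpr (isUnit_iff_ne_zero.mpr (pow_ne_zero _ hq))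
  refine ⟨C (q ^ m) * r, C (q ^ n) * s, u₂, v₂,
    mul_ne_zero (C_ne_zero.mpr (pow_ne_zero _ hq)) hs, hu₂ne, hv₂ne, hcop₂, hXu₂, hXv₂, ?_, ?_⟩
  · intro h
    rw [mul_comp, C_comp]
    exact ((isCoprime_mul_unit_left_left hqm _ _).mpr
      ((isCoprime_mul_unit_left_right hqn _ _).mpr (hrs h)))
  · set A := algebraMap (Polynomial F) (RatFunc F) with hAdef
    have hufac' : u = g * (X ^ m * u₂) := by rw [← hu₁, hufac]
    have hvfac' : v = g * (X ^ n * v₂) := by rw [← hv₁, hvfac]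
    have hAg : A g ≠ 0 := RatFunc.algebraMap_ne_zero hgne
    have hAgσ : A (g.comp (C q * X)) ≠ 0 :=
      RatFunc.algebraMap_ne_zero (comp_CX_ne_zero hq hgne)
    have hAs : A s ≠ 0 := RatFunc.algebraMap_ne_zero hs
    have hAu₂ : A u₂ ≠ 0 := RatFunc.algebraMap_ne_zero hu₂ne
    have hAv₂ : A v₂ ≠ 0 := RatFunc.algebraMap_ne_zero hv₂ne
    have hAu₂σ : A (u₂.comp (C q * X)) ≠ 0 :=
      RatFunc.algebraMap_ne_zero (comp_CX_ne_zero hq hu₂ne)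
    have hAv₂σ : A (v₂.comp (C q * X)) ≠ 0 :=
      RatFunc.algebraMap_ne_zero (comp_CX_ne_zero hq hv₂ne)
    have hAX : A X ≠ 0 := RatFunc.algebraMap_ne_zero X_ne_zero
    have hACm : A (C (q ^ m)) ≠ 0 := RatFunc.algebraMap_ne_zero (C_ne_zero.mpr (pow_ne_zero _ hq))
    have hACn : A (C (q ^ n)) ≠ 0 := RatFunc.algebraMap_ne_zero (C_ne_zero.mpr (pow_ne_zero _ hq))
    have hACq : A (C q) ≠ 0 := RatFunc.algebraMap_ne_zero (C_ne_zero.mpr hq)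
    have hpm : A (C q) ^ m ≠ 0 := pow_ne_zero _ hACq
    have hpn : A (C q) ^ n ≠ 0 := pow_ne_zero _ hACq
    have hXm : A X ^ m ≠ 0 := pow_ne_zero _ hAX
    have hXn : A X ^ n ≠ 0 := pow_ne_zero _ hAX
    rw [hR, hufac', hvfac']
    simp only [mul_comp, pow_comp, X_comp, C_pow, mul_pow, map_mul, map_pow]
    exact field_aux _ _ _ _ _ _ _ _ _ _ _ _ hAs hAg hAgσ hXm hXn hpm hpn hAu₂ hAv₂ hAu₂σ hAv₂σ
end

section
/- Let F be a field of characteristic zero and q ∈ F nonzero and not a root of unity. Let f ∈ F[x,y] be a nonconstant polynomial that is ε_y-free (i.e., for every integer m ≠ 0, any common irreducible factor of f(x,y) and f(x, q^m y) must be of the form y) and not q-proper (i.e., f has an irreducible factor p₀ with p₀(x,y) coprime to p₀(q^i x, q^j y) for all (i,j) ∈ ℤ² \ {(0,0)}). Then there exists an irreducible factor p of f such that p(x,y) is coprime to p(q^i x, q^j y) for all (i,j) ∈ ℤ² \ {(0,0)}, and p(x,y) is coprime to f(q^i x, q^j y) for all (i,j) ∈ (ℕ × ℤ) \ {(0,0)}.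 -/
/-- The substitution `(x, y) ↦ (q^i x, q^j y)` on `F[x,y]`. -/
noncomputable def qShift {F : Type*} [Field F] (q : F) (i j : ℤ) :
    MvPolynomial (Fin 2) F →ₐ[F] MvPolynomial (Fin 2) F :=
  MvPolynomial.aeval ![(q ^ i) • MvPolynomial.X 0, (q ^ j) • MvPolynomial.X 1]

section aux
variable {F : Type*} [Field F] {q : F}

lemma qShift_comp (hq : q ≠ 0) (i j a b : ℤ) (p : MvPolynomial (Fin 2) F) :
    qShift q i j (qShift q a b p) = qShift q (i+a) (j+b) p := by
  have : (qShift q i j).comp (qShift q a b) = qShift q (i+a) (j+b) := by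
    apply MvPolynomial.algHom_ext
    intro k
    fin_cases k <;>
      simp [qShift, smul_smul, ← zpow_add₀ hq, add_comm]
  exact congrArg (fun g : MvPolynomial (Fin 2) F →ₐ[F] _ => g p) this

lemma qShift_zero_zero (p : MvPolynomial (Fin 2) F) : qShift q 0 0 p = p := by
  have : (qShift q 0 0 : MvPolynomial (Fin 2) F →ₐ[F] _) = AlgHom.id F _ := by
    apply MvPolynomial.algHom_ext
    intro k
    fin_cases k <;> simp [qShift]
  rw [this]; rfl

/-- `qShift` as an algebra equivalence. -/
noncomputable def qShiftEquiv (q : F) (hq : q ≠ 0) (i j : ℤ) :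
    MvPolynomial (Fin 2) F ≃ₐ[F] MvPolynomial (Fin 2) F :=
  AlgEquiv.ofAlgHom (qShift q i j) (qShift q (-i) (-j))
    (by ext1 p; simp [AlgHom.coe_comp, Function.comp, qShift_comp hq, qShift_zero_zero])
    (by ext1 p; simp [AlgHom.coe_comp, Function.comp, qShift_comp hq, qShift_zero_zero])

lemma qShiftEquiv_apply (hq : q ≠ 0) (i j : ℤ) (p : MvPolynomial (Fin 2) F) :
    qShiftEquiv q hq i j p = qShift q i j p := rfl

lemma irreducible_qShift_iff (hq : q ≠ 0) (i j : ℤ) (p : MvPolynomial (Fin 2) F) :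
    Irreducible (qShift q i j p) ↔ Irreducible p :=
  MulEquiv.irreducible_iff (qShiftEquiv q hq i j).toMulEquiv

lemma isRelPrime_qShift_iff (hq : q ≠ 0) (i j : ℤ) (a b : MvPolynomial (Fin 2) F) :
    IsRelPrime (qShift q i j a) (qShift q i j b) ↔ IsRelPrime a b := by
  set e := qShiftEquiv q hq i j
  constructor
  · intro h d hda hdb
    have := (h (map_dvd e hda) (map_dvd e hdb)).map e.symm
    simpa using this
  · intro h d hda hdb
    have hda' : d ∣ e a := hda
    have hdb' : d ∣ e b := hdb
    have h1 : e.symm d ∣ a := by simpa using map_dvd e.symm hda'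
    have h2 : e.symm d ∣ b := by simpa using map_dvd e.symm hdb'
    simpa using (h h1 h2).map e

lemma qShift_dvd (hq : q ≠ 0) (i j : ℤ) {a b : MvPolynomial (Fin 2) F} (h : a ∣ b) :
    qShift q i j a ∣ qShift q i j b :=
  map_dvd (qShift q i j) h

lemma qShift_X1_assoc (hq : q ≠ 0) (i j : ℤ) :
    Associated (qShift q i j (MvPolynomial.X 1) : MvPolynomial (Fin 2) F) (MvPolynomial.X 1) := by
  have h1 : (qShift q i j (MvPolynomial.X 1) : MvPolynomial (Fin 2) F)
      = MvPolynomial.C (q ^ j) * MvPolynomial.X 1 := by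
    simp [qShift, MvPolynomial.smul_eq_C_mul]
  rw [h1]
  have hu : IsUnit (MvPolynomial.C (q ^ j) : MvPolynomial (Fin 2) F) :=
    (isUnit_iff_ne_zero.mpr (zpow_ne_zero j hq)).map (MvPolynomial.C : F →+* MvPolynomial (Fin 2) F)
  exact (Associated.symm ⟨hu.unit, by rw [mul_comm]; simp [IsUnit.unit_spec]⟩)

end aux

/-- A non-`q`-proper, `ε_y`-free polynomial `f` has an irreducible factor `p` that is
coprime to all its own nontrivial `q`-shifts and coprime to `f(q^i x, q^j y)` for all
`(i, j) ∈ (ℕ × ℤ) \ {(0,0)}`. -/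
theorem exists_special_factor (F : Type*) [Field F] [CharZero F] (q : F)
    (hq : q ≠ 0) (hq1 : ∀ n : ℕ, 0 < n → q ^ n ≠ 1)
    (f : MvPolynomial (Fin 2) F) (hf0 : f ≠ 0) (hfdeg : 0 < f.totalDegree)
    (hfree : ∀ m : ℤ, m ≠ 0 → ∀ p : MvPolynomial (Fin 2) F,
      Irreducible p → p ∣ f → p ∣ qShift q 0 m f → Associated p (MvPolynomial.X 1))
    (hnotproper : ∃ p₀ : MvPolynomial (Fin 2) F, Irreducible p₀ ∧ p₀ ∣ f ∧
      ∀ i j : ℤ, ¬ (i = 0 ∧ j = 0) → IsRelPrime p₀ (qShift q i j p₀)) :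
    ∃ p : MvPolynomial (Fin 2) F, Irreducible p ∧ p ∣ f ∧
      (∀ i j : ℤ, ¬ (i = 0 ∧ j = 0) → IsRelPrime p (qShift q i j p)) ∧
      (∀ (i : ℕ) (j : ℤ), ¬ ((i : ℤ) = 0 ∧ j = 0) →
        IsRelPrime p (qShift q (i : ℤ) j f)) := by
  obtain ⟨p₀, hirr, hdvd, hcop⟩ := hnotproper
  classical
  letI : NormalizationMonoid (MvPolynomial (Fin 2) F) :=
    UniqueFactorizationMonoid.normalizationMonoid.toNormalizationMonoid
  -- shifts of p₀ are pairwise coprime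
  have hpair : ∀ a b c d : ℤ, (a, b) ≠ (c, d) →
      IsRelPrime (qShift q a b p₀) (qShift q c d p₀) := by
    intro a b c d hne
    have h0 : IsRelPrime p₀ (qShift q (c-a) (d-b) p₀) := by
      apply hcop
      rintro ⟨h1, h2⟩
      apply hne
      have : c = a := by linarith
      have : d = b := by linarith
      simp_all
    have := (isRelPrime_qShift_iff hq a b _ _).mpr h0
    rwa [qShift_comp hq a b (c-a) (d-b), show a + (c-a) = c by ring,
      show b + (d-b) = d by ring] at this
  -- the set of shift-indices whose shift divides f
  set T : Set (ℤ × ℤ) := {ab | qShift q ab.1 ab.2 p₀ ∣ f} with hT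
  have hT00 : ((0:ℤ), (0:ℤ)) ∈ T := by
    simpa [hT, qShift_zero_zero] using hdvd
  -- any two distinct members of T give non-associated shifts; row uniqueness
  have hrow : ∀ a b b' : ℤ, (a, b) ∈ T → (a, b') ∈ T → b = b' := by
    intro a b b' hb hb'
    by_contra hne
    have hm : b - b' ≠ 0 := sub_ne_zero.mpr hne
    have hsirr : Irreducible (qShift q a b p₀) := (irreducible_qShift_iff hq a b p₀).mpr hirr
    have hdf : qShift q a b p₀ ∣ f := hb
    have hdsf : qShift q a b p₀ ∣ qShift q 0 (b - b') f := by
      have := qShift_dvd (q := q) hq 0 (b - b') (hb' : qShift q a b' p₀ ∣ f)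
      rwa [qShift_comp hq 0 (b-b') a b', show (0:ℤ) + a = a by ring,
        show b - b' + b' = b by ring] at this
    have hX : Associated (qShift q a b p₀) (MvPolynomial.X 1) :=
      hfree (b - b') hm _ hsirr hdf hdsf
    -- transport back: p₀ is associated to X 1
    have hX0 : Associated p₀ (MvPolynomial.X 1) := by
      have := hX.map (qShiftEquiv q hq (-a) (-b))
      rw [qShiftEquiv_apply, qShiftEquiv_apply, qShift_comp hq (-a) (-b) a b] at this
      simp only [neg_add_cancel, qShift_zero_zero] at this
      exact this.trans (qShift_X1_assoc hq (-a) (-b))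
    -- then p₀ divides its own (0,1)-shift, contradicting hcop
    have h01 : p₀ ∣ qShift q 0 1 p₀ := by
      have h1 : Associated (qShift q 0 1 p₀) (qShift q 0 1 (MvPolynomial.X 1)) :=
        hX0.map (qShift q 0 1)
      exact hX0.dvd.trans ((qShift_X1_assoc hq 0 1).symm.dvd.trans h1.symm.dvd)
    exact hirr.not_isUnit (hcop 0 1 (by simp) dvd_rfl h01)
  -- T is finite
  have hTfin : T.Finite := by
    apply Set.Finite.of_finite_image (f := fun ab : ℤ × ℤ => normalize (qShift q ab.1 ab.2 p₀))
    · apply Set.Finite.subset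
        (Set.Finite.ofFinset (UniqueFactorizationMonoid.normalizedFactors f).toFinset
          (fun x => Iff.rfl))
      rintro x ⟨⟨a, b⟩, hab, rfl⟩
      have hsirr : Irreducible (qShift q a b p₀) := (irreducible_qShift_iff hq a b p₀).mpr hirr
      obtain ⟨g, hg, hassoc⟩ :=
        UniqueFactorizationMonoid.exists_mem_normalizedFactors_of_dvd hf0 hsirr hab
      have hng : normalize (qShift q a b p₀) = g := by
        rw [← UniqueFactorizationMonoid.normalize_normalized_factor g hg]
        exact normalize_eq_normalize hassoc.dvd hassoc.symm.dvd
      simp only [hng, Set.mem_setOf_eq]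
      exact Multiset.mem_toFinset.mpr hg
    · rintro ⟨a, b⟩ hab ⟨c, d⟩ hcd heq
      by_contra hne
      have hassoc : Associated (qShift q a b p₀) (qShift q c d p₀) :=
        associated_of_dvd_dvd (normalize_eq_normalize_iff.mp heq).1
          (normalize_eq_normalize_iff.mp heq).2
      have hsirr : Irreducible (qShift q a b p₀) := (irreducible_qShift_iff hq a b p₀).mpr hirr
      exact hsirr.not_isUnit (hpair a b c d (by simpa using hne) dvd_rfl hassoc.dvd)
  -- pick a member of T with minimal first coordinate
  obtain ⟨⟨a, b⟩, habT, hmin⟩ :=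
    Set.Finite.exists_minimalFor Prod.fst T hTfin ⟨((0:ℤ),(0:ℤ)), hT00⟩
  refine ⟨qShift q a b p₀, (irreducible_qShift_iff hq a b p₀).mpr hirr, habT, ?_, ?_⟩
  · intro i j hij
    rw [qShift_comp hq i j a b]
    have h0 : IsRelPrime p₀ (qShift q i j p₀) := hcop i j hij
    have := (isRelPrime_qShift_iff hq a b _ _).mpr h0
    rwa [qShift_comp hq a b i j, add_comm a i, add_comm b j] at this
  · intro i j hij
    have hsirr : Irreducible (qShift q a b p₀) := (irreducible_qShift_iff hq a b p₀).mpr hirr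
    -- coprimality for an irreducible reduces to non-divisibility
    intro d hdp hdf
    by_contra hd
    -- d is a non-unit divisor of the irreducible, hence associated to it
    have hdvd2 : qShift q a b p₀ ∣ qShift q (i:ℤ) j f := by
      obtain ⟨e, he⟩ := hdp
      rcases hsirr.isUnit_or_isUnit he with h | h
      · exact absurd h hd
      · obtain ⟨u, hu⟩ := h
        have hsd : qShift q a b p₀ ∣ d :=
          ⟨(u⁻¹ : (MvPolynomial (Fin 2) F)ˣ), by
            rw [he, ← hu, mul_assoc, Units.mul_inv, mul_one]⟩
        exact hsd.trans hdf
    -- transport: the (a - i, b - j)-shift of p₀ divides f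
    have hmem : ((a - i : ℤ), (b - j : ℤ)) ∈ T := by
      have := qShift_dvd (q := q) hq (-i) (-j) hdvd2
      rw [qShift_comp hq (-i) (-j) a b, qShift_comp hq (-i) (-j) (i:ℤ) j] at this
      simp only [neg_add_cancel, qShift_zero_zero] at this
      show qShift q (a - i) (b - j) p₀ ∣ f
      rwa [show -(i:ℤ) + a = a - i by ring, show -j + b = b - j by ring] at this
    rcases eq_or_ne (i : ℤ) 0 with hi | hi
    · have hj : j ≠ 0 := fun h => hij ⟨hi, h⟩
      rw [hi, sub_zero] at hmem
      exact hj (by have := hrow a b (b - j) habT hmem; linarith)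
    · have hipos : 0 < (i:ℤ) := lt_of_le_of_ne (Int.ofNat_nonneg i) (Ne.symm hi)
      have hle : ((a - i : ℤ), (b - j : ℤ)).fst ≤ ((a,b) : ℤ × ℤ).fst := by
        show a - (i:ℤ) ≤ a
        omega
      have := hmin hmem hle
      simp only [Prod.fst] at this
      omega
end

section
/- Let q be a complex number with q ≠ 0 not a root of unity, and define T(n,k) = q^k (1 + q^{n+1} + q^{k+2}) / [(q^n + q^k + 1)(q^n + q^{k+1} + 1) ∏_{j=1}^{k+1} (1 − q^j)] and G(n,k) = 1 / [(q^n + q^k + 1) ∏_{j=1}^{k} (1 − q^j)]. Then T(n,k) = G(n,k+1) − G(n,k) for all n, k ≥ 0. -/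
/-!
Over the common denominator `(q^n+q^k+1)(q^n+q^{k+1}+1) ∏_{j ≤ k+1} (1 - q^j)`, the difference
`G(n,k+1) - G(n,k)` has numerator `(q^n+q^k+1) - (q^n+q^{k+1}+1)(1 - q^{k+1})`, which expands to
`q^k (1 + q^{n+1} + q^{k+2})`.
-/

open Finset

theorem prod_Icc_one_sub_pow_ne_zero {R : Type*} [CommRing R] [IsDomain R] {q : R}
    (hq : ∀ j : ℕ, 0 < j → q ^ j ≠ 1) (m : ℕ) : ∏ j ∈ Icc 1 m, (1 - q ^ j) ≠ 0 :=
  prod_ne_zero_iff.mpr fun j hj => sub_ne_zero.mpr (hq j (mem_Icc.mp hj).1).symm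

theorem term_eq_one_div_sub_one_div {K : Type*} [Field K] {q : K} {n k : ℕ}
    (hA : q ^ n + q ^ k + 1 ≠ 0) (hB : q ^ n + q ^ (k + 1) + 1 ≠ 0)
    (hP : ∏ j ∈ Icc 1 (k + 1), (1 - q ^ j) ≠ 0) :
    q ^ k * (1 + q ^ (n + 1) + q ^ (k + 2)) /
        ((q ^ n + q ^ k + 1) * (q ^ n + q ^ (k + 1) + 1) * ∏ j ∈ Icc 1 (k + 1), (1 - q ^ j)) =
      1 / ((q ^ n + q ^ (k + 1) + 1) * ∏ j ∈ Icc 1 (k + 1), (1 - q ^ j)) -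
      1 / ((q ^ n + q ^ k + 1) * ∏ j ∈ Icc 1 k, (1 - q ^ j)) := by
  rw [prod_Icc_succ_top (Nat.le_add_left 1 k)] at hP ⊢
  obtain ⟨hPk, hk⟩ := mul_ne_zero_iff.mp hP
  field_simp
  ring

theorem example1_telescopes_general (q : ℂ)
    (hq1 : ∀ n : ℕ, 0 < n → q ^ n ≠ 1)
    (h3 : ∀ n k : ℕ, q ^ n + q ^ k + 1 ≠ 0) :
    ∀ n k : ℕ,
      q ^ k * (1 + q ^ (n + 1) + q ^ (k + 2)) /
        ((q ^ n + q ^ k + 1) * (q ^ n + q ^ (k + 1) + 1) *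
          ∏ j ∈ Finset.Icc 1 (k + 1), (1 - q ^ j)) =
      1 / ((q ^ n + q ^ (k + 1) + 1) * ∏ j ∈ Finset.Icc 1 (k + 1), (1 - q ^ j)) -
      1 / ((q ^ n + q ^ k + 1) * ∏ j ∈ Finset.Icc 1 k, (1 - q ^ j)) := fun n k =>
  term_eq_one_div_sub_one_div (h3 n k) (h3 n (k + 1))
    (prod_Icc_one_sub_pow_ne_zero hq1 (k + 1))

/-- Example 1: `T(n,k) = G(n,k+1) - G(n,k)`, i.e. `(1, G)` is a `qZ`-pair for `T`. -/
theorem example1_telescopes (q : ℂ) (hq : q ≠ 0)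
    (hq1 : ∀ n : ℕ, 0 < n → q ^ n ≠ 1)
    (h3 : ∀ n k : ℕ, q ^ n + q ^ k + 1 ≠ 0) :
    ∀ n k : ℕ,
      q ^ k * (1 + q ^ (n + 1) + q ^ (k + 2)) /
        ((q ^ n + q ^ k + 1) * (q ^ n + q ^ (k + 1) + 1) *
          ∏ j ∈ Finset.Icc 1 (k + 1), (1 - q ^ j)) =
      1 / ((q ^ n + q ^ (k + 1) + 1) * ∏ j ∈ Finset.Icc 1 (k + 1), (1 - q ^ j)) -
      1 / ((q ^ n + q ^ k + 1) * ∏ j ∈ Finset.Icc 1 k, (1 - q ^ j)) :=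
  example1_telescopes_general q hq1 h3
end
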